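/- Let φ be an LTL formula and w an infinite word with w ⊨ φ. Let G be the set of G-subformulas Gψ of φ such that w ⊨ FGψ. Then for almost every i ∈ ℕ, the conjunction ⋀_{Gψ∈G} Gψ propositionally implies afG(φ, w[0..i]). -/

import Mathlib

namespace LTLF

/-- LTL formulas in negation normal form over atomic propositions `Ap`. -/
inductive LTL (Ap : Type) : Type
  | tt : LTL Ap
  | ff : LTL Ap
  | atom : Ap → LTL Ap
  | natom : Ap → LTL Ap
  | and : LTL Ap → LTL Ap → LTL Ap
  | or : LTL Ap → LTL Ap → LTL Ap
  | next : LTL Ap → LTL Ap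
  | fut : LTL Ap → LTL Ap
  | glob : LTL Ap → LTL Ap
  | untl : LTL Ap → LTL Ap → LTL Ap

variable {Ap : Type}

/-- Infinite words over the alphabet `2^Ap`. -/
abbrev Word (Ap : Type) := ℕ → Set Ap

/-- The suffix `w_k`. -/
def suffix (w : Word Ap) (k : ℕ) : Word Ap := fun i => w (i + k)

/-- Standard LTL semantics on infinite words. -/
def Sat : LTL Ap → Word Ap → Prop
  | .tt, _ => True
  | .ff, _ => False
  | .atom a, w => a ∈ w 0
  | .natom a, w => a ∉ w 0
  | .and φ ψ, w => Sat φ w ∧ Sat ψ w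
  | .or φ ψ, w => Sat φ w ∨ Sat ψ w
  | .next φ, w => Sat φ (suffix w 1)
  | .fut φ, w => ∃ k, Sat φ (suffix w k)
  | .glob φ, w => ∀ k, Sat φ (suffix w k)
  | .untl φ ψ, w => ∃ k, Sat ψ (suffix w k) ∧ ∀ j < k, Sat φ (suffix w j)

open Classical in
/-- The "after function" `af(φ, ν)`. -/
noncomputable def af : LTL Ap → Set Ap → LTL Ap
  | .tt, _ => .tt
  | .ff, _ => .ff
  | .atom a, ν => if a ∈ ν then .tt else .ff
  | .natom a, ν => if a ∈ ν then .ff else .tt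
  | .and φ ψ, ν => .and (af φ ν) (af ψ ν)
  | .or φ ψ, ν => .or (af φ ν) (af ψ ν)
  | .next φ, _ => φ
  | .fut φ, ν => .or (af φ ν) (.fut φ)
  | .glob φ, ν => .and (af φ ν) (.glob φ)
  | .untl φ ψ, ν => .or (af ψ ν) (.and (af φ ν) (.untl φ ψ))

/-- `af` extended to finite words. -/
noncomputable def afw (φ : LTL Ap) (u : List (Set Ap)) : LTL Ap := u.foldl af φ

open Classical in
/-- The variant `afG`, identical to `af` except `afG(Gφ, ν) = Gφ`. -/
noncomputable def afG : LTL Ap → Set Ap → LTL Ap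
  | .tt, _ => .tt
  | .ff, _ => .ff
  | .atom a, ν => if a ∈ ν then .tt else .ff
  | .natom a, ν => if a ∈ ν then .ff else .tt
  | .and φ ψ, ν => .and (afG φ ν) (afG ψ ν)
  | .or φ ψ, ν => .or (afG φ ν) (afG ψ ν)
  | .next φ, _ => φ
  | .fut φ, ν => .or (afG φ ν) (.fut φ)
  | .glob φ, _ => .glob φ
  | .untl φ ψ, ν => .or (afG ψ ν) (.and (afG φ ν) (.untl φ ψ))

/-- `afG` extended to finite words. -/
noncomputable def afGw (φ : LTL Ap) (u : List (Set Ap)) : LTL Ap := u.foldl afG φ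

/-- The finite infix `w[i..j] = w[i] w[i+1] ⋯ w[j]`. -/
def infixW (w : Word Ap) (i j : ℕ) : List (Set Ap) :=
  (List.range (j + 1 - i)).map (fun k => w (i + k))

/-- The finite prefix `w[0..i]`. -/
def prefixW (w : Word Ap) (i : ℕ) : List (Set Ap) := infixW w 0 i

/-- Concatenation of a finite word with an infinite word. -/
def cat (u : List (Set Ap)) (w : Word Ap) : Word Ap :=
  fun k => if h : k < u.length then u.get ⟨k, h⟩ else w (k - u.length)

/-- Propositional evaluation of a formula under a valuation `v`, treating
literals and temporal formulas (`X`, `F`, `G`, `U`) as opaque propositional atoms. -/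
def propSat (v : LTL Ap → Prop) : LTL Ap → Prop
  | .tt => True
  | .ff => False
  | .and φ ψ => propSat v φ ∧ propSat v ψ
  | .or φ ψ => propSat v φ ∨ propSat v ψ
  | φ => v φ

/-- A valuation is consistent on literals: `a` and `¬a` get complementary values. -/
def LitConsistent (v : LTL Ap → Prop) : Prop :=
  ∀ a : Ap, v (.atom a) ↔ ¬ v (.natom a)

/-- Propositional implication `φ ⊨_p ψ`. -/
def PropImp (φ ψ : LTL Ap) : Prop :=
  ∀ v : LTL Ap → Prop, LitConsistent v → propSat v φ → propSat v ψ

/-- Propositional equivalence `φ ≡_p ψ`. -/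
def PropEquiv (φ ψ : LTL Ap) : Prop :=
  ∀ v : LTL Ap → Prop, LitConsistent v → (propSat v φ ↔ propSat v ψ)

/-- `⋀_{χ ∈ H} χ ⊨_p ψ` : the (possibly infinite) conjunction of the
hypotheses `H` propositionally implies `ψ`. -/
def PropImpSet (H : Set (LTL Ap)) (ψ : LTL Ap) : Prop :=
  ∀ v : LTL Ap → Prop, LitConsistent v → (∀ χ ∈ H, propSat v χ) → propSat v ψ

/-- The list of subformulas of a formula. -/
def subfs : LTL Ap → List (LTL Ap)
  | .tt => [.tt]
  | .ff => [.ff]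
  | .atom a => [.atom a]
  | .natom a => [.natom a]
  | .and φ ψ => .and φ ψ :: (subfs φ ++ subfs ψ)
  | .or φ ψ => .or φ ψ :: (subfs φ ++ subfs ψ)
  | .next φ => .next φ :: subfs φ
  | .fut φ => .fut φ :: subfs φ
  | .glob φ => .glob φ :: subfs φ
  | .untl φ ψ => .untl φ ψ :: (subfs φ ++ subfs ψ)

/-- `Gψ` is a `G`-subformula of `φ`. -/
def GSub (φ ψ : LTL Ap) : Prop := LTL.glob ψ ∈ subfs φ

/-- A formula is `G`-free if it contains no occurrence of `G`. -/
def GFree : LTL Ap → Prop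
  | .glob _ => False
  | .and φ ψ => GFree φ ∧ GFree ψ
  | .or φ ψ => GFree φ ∧ GFree ψ
  | .next φ => GFree φ
  | .fut φ => GFree φ
  | .untl φ ψ => GFree φ ∧ GFree ψ
  | _ => True

/-- `ind(w, ψ)`: the least index `j` with `w_j ⊨ Gψ`. -/
noncomputable def ind (w : Word Ap) (ψ : LTL Ap) : ℕ :=
  sInf {j | Sat (.glob ψ) (suffix w j)}
/-! The proof is an induction on `φ`, generalised over the word. `afG` leaves `Gψ` untouched,
and when `w ⊨ Gψ` the formula `Gψ` is itself one of the hypotheses. Along `w[0..i]`, the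
`afG`-unfoldings of `Fφ` and `φ U ψ` keep as disjuncts `afG` of `φ` (resp. of `ψ`, together with
the preceding `φ`s) along the suffix where the eventuality is fulfilled, so finitely many instances
of the induction hypothesis apply once `i` is large. Passing to a suffix or to a subformula only
shrinks the set of `G`-subformulas that must be covered by hypotheses. -/

open Filter

lemma suffix_suffix (w : Word Ap) (j k : ℕ) : suffix (suffix w k) j = suffix w (j + k) := by
  funext n
  simp only [suffix, Nat.add_assoc]

lemma prefixW_succ (w : Word Ap) (n : ℕ) :
    prefixW w (n + 1) = w 0 :: prefixW (suffix w 1) n := by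
  simp only [prefixW, infixW, Nat.sub_zero, Nat.zero_add, List.range_succ_eq_map, List.map_cons,
    List.map_map]
  rfl

lemma eventually_atTop_succ_iff {p : ℕ → Prop} :
    (∀ᶠ n in atTop, p (n + 1)) ↔ ∀ᶠ n in atTop, p n := by
  conv_rhs => rw [← map_add_atTop_eq_nat 1]
  rfl

section afGw

lemma afGw_cons (φ : LTL Ap) (ν : Set Ap) (u : List (Set Ap)) :
    afGw φ (ν :: u) = afGw (afG φ ν) u := rfl

lemma afGw_tt (u : List (Set Ap)) : afGw .tt u = .tt :=
  List.foldl_fixed' (fun _ => rfl) u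

lemma afGw_glob (ψ : LTL Ap) (u : List (Set Ap)) : afGw (.glob ψ) u = .glob ψ :=
  List.foldl_fixed' (fun _ => rfl) u

lemma afGw_and (φ ψ : LTL Ap) (u : List (Set Ap)) :
    afGw (.and φ ψ) u = .and (afGw φ u) (afGw ψ u) := by
  induction u generalizing φ ψ with
  | nil => rfl
  | cons ν u ih => exact ih _ _

lemma afGw_or (φ ψ : LTL Ap) (u : List (Set Ap)) :
    afGw (.or φ ψ) u = .or (afGw φ u) (afGw ψ u) := by
  induction u generalizing φ ψ with
  | nil => rfl
  | cons ν u ih => exact ih _ _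

lemma afGw_next_cons (φ : LTL Ap) (ν : Set Ap) (u : List (Set Ap)) :
    afGw (.next φ) (ν :: u) = afGw φ u := rfl

lemma afGw_fut_cons (φ : LTL Ap) (ν : Set Ap) (u : List (Set Ap)) :
    afGw (.fut φ) (ν :: u) = .or (afGw φ (ν :: u)) (afGw (.fut φ) u) :=
  afGw_or _ _ u

lemma afGw_untl_cons (φ ψ : LTL Ap) (ν : Set Ap) (u : List (Set Ap)) :
    afGw (.untl φ ψ) (ν :: u) =
      .or (afGw ψ (ν :: u)) (.and (afGw φ (ν :: u)) (afGw (.untl φ ψ) u)) := by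
  rw [afGw_cons, afG, afGw_or, afGw_and]
  rfl

end afGw

section PropImpSet

variable {H : Set (LTL Ap)} {φ ψ : LTL Ap}

lemma PropImpSet.tt : PropImpSet H .tt := fun _ _ _ => trivial

lemma PropImpSet.of_mem (h : φ ∈ H) : PropImpSet H φ := fun _ _ hH => hH φ h

lemma PropImpSet.and (hφ : PropImpSet H φ) (hψ : PropImpSet H ψ) : PropImpSet H (.and φ ψ) :=
  fun v hv hH => ⟨hφ v hv hH, hψ v hv hH⟩

lemma PropImpSet.or_left (h : PropImpSet H φ) : PropImpSet H (.or φ ψ) :=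
  fun v hv hH => Or.inl (h v hv hH)

lemma PropImpSet.or_right (h : PropImpSet H ψ) : PropImpSet H (.or φ ψ) :=
  fun v hv hH => Or.inr (h v hv hH)

end PropImpSet

def CoversFG (H : Set (LTL Ap)) (φ : LTL Ap) (w : Word Ap) : Prop :=
  ∀ ψ, GSub φ ψ → Sat (.fut (.glob ψ)) w → .glob ψ ∈ H

namespace CoversFG

variable {H : Set (LTL Ap)} {φ φ' : LTL Ap} {w : Word Ap}

lemma mono (hsub : subfs φ' ⊆ subfs φ) (h : CoversFG H φ w) : CoversFG H φ' w :=
  fun ψ hG => h ψ (hsub hG)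

lemma suffix (h : CoversFG H φ w) (k : ℕ) : CoversFG H φ (suffix w k) := by
  rintro ψ hG ⟨j, hj⟩
  refine h ψ hG ⟨j + k, ?_⟩
  rwa [suffix_suffix] at hj

end CoversFG

section Eventually

variable {H : Set (LTL Ap)}

lemma eventually_propImpSet_fut (φ : LTL Ap) (k : ℕ) {w : Word Ap}
    (h : ∀ᶠ n in atTop, PropImpSet H (afGw φ (prefixW (suffix w k) n))) :
    ∀ᶠ n in atTop, PropImpSet H (afGw (.fut φ) (prefixW w n)) := by
  induction k generalizing w with
  | zero =>
    rw [← eventually_atTop_succ_iff] at h ⊢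
    filter_upwards [h] with n hn
    rw [prefixW_succ, afGw_fut_cons, ← prefixW_succ]
    exact hn.or_left
  | succ k ih =>
    have hw₁ := ih (w := suffix w 1) (by rwa [suffix_suffix])
    rw [← eventually_atTop_succ_iff]
    filter_upwards [hw₁] with n hn
    rw [prefixW_succ, afGw_fut_cons]
    exact hn.or_right

lemma eventually_propImpSet_untl (φ ψ : LTL Ap) (k : ℕ) {w : Word Ap}
    (hψ : ∀ᶠ n in atTop, PropImpSet H (afGw ψ (prefixW (suffix w k) n)))
    (hφ : ∀ j < k, ∀ᶠ n in atTop, PropImpSet H (afGw φ (prefixW (suffix w j) n))) :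
    ∀ᶠ n in atTop, PropImpSet H (afGw (.untl φ ψ) (prefixW w n)) := by
  induction k generalizing w with
  | zero =>
    rw [← eventually_atTop_succ_iff] at hψ ⊢
    filter_upwards [hψ] with n hn
    rw [prefixW_succ, afGw_untl_cons, ← prefixW_succ]
    exact hn.or_left
  | succ k ih =>
    have hw₁ := ih (w := suffix w 1) (by rwa [suffix_suffix])
      fun j hj => by simpa only [suffix_suffix] using hφ (j + 1) (by omega)
    have hw₀ := eventually_atTop_succ_iff.mpr (hφ 0 k.succ_pos)
    rw [← eventually_atTop_succ_iff]
    filter_upwards [hw₀, hw₁] with n hn₀ hn₁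
    rw [prefixW_succ, afGw_untl_cons, ← prefixW_succ]
    exact (hn₀.and hn₁).or_right

theorem CoversFG.eventually_propImpSet_afGw {φ : LTL Ap} {w : Word Ap} (hH : CoversFG H φ w)
    (hw : Sat φ w) : ∀ᶠ n in atTop, PropImpSet H (afGw φ (prefixW w n)) := by
  induction φ generalizing w with
  | tt => exact .of_forall fun n => by rw [afGw_tt]; exact .tt
  | ff => exact hw.elim
  | atom a | natom a =>
    rw [← eventually_atTop_succ_iff]
    refine .of_forall fun n => ?_
    simp only [Sat] at hw
    rw [prefixW_succ, afGw_cons]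
    simp only [afG, hw, if_true, if_false, afGw_tt]
    exact .tt
  | and φ ψ ihφ ihψ =>
    filter_upwards [ihφ (hH.mono fun _ h => by simp [subfs, h]) hw.1,
      ihψ (hH.mono fun _ h => by simp [subfs, h]) hw.2] with n hφ hψ
    exact afGw_and .. ▸ hφ.and hψ
  | or φ ψ ihφ ihψ =>
    rcases hw with hw | hw
    · filter_upwards [ihφ (hH.mono fun _ h => by simp [subfs, h]) hw] with n h
      exact afGw_or .. ▸ h.or_left
    · filter_upwards [ihψ (hH.mono fun _ h => by simp [subfs, h]) hw] with n h
      exact afGw_or .. ▸ h.or_right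
  | next φ ih =>
    rw [← eventually_atTop_succ_iff]
    filter_upwards [ih ((hH.mono fun _ h => by simp [subfs, h]).suffix 1) hw] with n h
    rwa [prefixW_succ, afGw_next_cons]
  | fut φ ih =>
    obtain ⟨k, hk⟩ := hw
    exact eventually_propImpSet_fut φ k
      (ih ((hH.mono fun _ h => by simp [subfs, h]).suffix k) hk)
  | glob ψ =>
    have hmem : .glob ψ ∈ H := hH ψ (by simp [GSub, subfs]) ⟨0, hw⟩
    exact .of_forall fun n => by rw [afGw_glob]; exact .of_mem hmem
  | untl φ ψ ihφ ihψ =>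
    obtain ⟨k, hψ, hφ⟩ := hw
    exact eventually_propImpSet_untl φ ψ k
      (ihψ ((hH.mono fun _ h => by simp [subfs, h]).suffix k) hψ)
      fun j hj => ihφ ((hH.mono fun _ h => by simp [subfs, h]).suffix j) (hφ j hj)

end Eventually

/-- if `w ⊨ φ` and `G` is the set of `G`-subformulas `Gψ` of `φ`
with `w ⊨ FGψ`, then for almost every `i`, `⋀_{Gψ∈G} Gψ ⊨_p afG(φ, w[0..i])`. -/
theorem propImp_afG_prefix {Ap : Type} (φ : LTL Ap) (w : Word Ap) (hw : Sat φ w) :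
    ∃ N : ℕ, ∀ i ≥ N,
      PropImpSet (LTL.glob '' {ψ | GSub φ ψ ∧ Sat (LTL.fut (LTL.glob ψ)) w})
        (afGw φ (prefixW w i)) :=
  eventually_atTop.mp <|
    CoversFG.eventually_propImpSet_afGw (fun ψ hG hF => ⟨ψ, ⟨hG, hF⟩, rfl⟩) hw

end LTLF
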